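/- arXiv:2305.20072 — 7 statements merged into one kernel-verified Lean document; each statement's English description precedes it below -/
import Mathlib

section
/- Let A be an m×n real matrix and b ∈ R^m. Then û = (-A^T) ⊞' b is the greatest subsolution: it satisfies A ⊞ û ≤ b, and any u with A ⊞ u ≤ b satisfies u ≤ û componentwise. -/
/-- Max-plus matrix-vector product: `(A ⊞ u) i = max_j (A i j + u j)`. -/
noncomputable def maxPlus {m n : ℕ} (A : Matrix (Fin (m + 1)) (Fin (n + 1)) ℝ)
    (u : Fin (n + 1) → ℝ) : Fin (m + 1) → ℝ :=
  fun i => ⨆ j, (A i j + u j)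

/-- `((-Aᵀ) ⊞' b) j = min_i (b i - A i j)`. -/
noncomputable def negTransMinPlus {m n : ℕ} (A : Matrix (Fin (m + 1)) (Fin (n + 1)) ℝ)
    (b : Fin (m + 1) → ℝ) : Fin (n + 1) → ℝ :=
  fun j => ⨅ i, (b i - A i j)

theorem greatest_subsolution {m n : ℕ} (A : Matrix (Fin (m + 1)) (Fin (n + 1)) ℝ)
    (b : Fin (m + 1) → ℝ) :
    (∀ i, maxPlus A (negTransMinPlus A b) i ≤ b i) ∧
      ∀ u : Fin (n + 1) → ℝ, (∀ i, maxPlus A u i ≤ b i) →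
        ∀ j, u j ≤ negTransMinPlus A b j := by
  constructor
  · intro i
    apply ciSup_le
    intro j
    have h : negTransMinPlus A b j ≤ b i - A i j :=
      ciInf_le (Set.Finite.bddBelow (Set.finite_range _)) i
    linarith
  · intro u hu j
    apply le_ciInf
    intro i
    have h : A i j + u j ≤ maxPlus A u i := by
      unfold maxPlus
      exact le_ciSup (Set.Finite.bddAbove (Set.finite_range fun j => A i j + u j)) j
    have := hu i
    linarith
end

section
/- Let A be an m×n real matrix, b ∈ R^m, and û = (-A^T) ⊞' b. Then for every u ∈ R^n with A ⊞ u ≤ b and every i, we have b_i - (A ⊞ u)_i ≥ b_i - (A ⊞ û)_i ≥ 0. Consequently, for any ℓ ≥ 1, û minimizes ‖A ⊞ u - b‖_ℓ over all u satisfying the constraint A ⊞ u ≤ b. -/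
/-- The `ℓ`-norm on `ℝ^m`. -/
noncomputable def lNorm {m : ℕ} (ℓ : ℝ) (x : Fin (m + 1) → ℝ) : ℝ :=
  (∑ i, |x i| ^ ℓ) ^ (1 / ℓ)

theorem subsolution_residual_and_lnorm_min {m n : ℕ}
    (A : Matrix (Fin (m + 1)) (Fin (n + 1)) ℝ) (b : Fin (m + 1) → ℝ)
    (ℓ : ℝ) (hℓ : 1 ≤ ℓ) :
    ∀ u : Fin (n + 1) → ℝ, (∀ i, maxPlus A u i ≤ b i) →
      (∀ i, b i - maxPlus A u i ≥ b i - maxPlus A (negTransMinPlus A b) i ∧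
        b i - maxPlus A (negTransMinPlus A b) i ≥ 0) ∧
      lNorm ℓ (maxPlus A (negTransMinPlus A b) - b) ≤ lNorm ℓ (maxPlus A u - b) := by
  intro u hu
  set v := negTransMinPlus A b with hv
  have hub : ∀ i, maxPlus A v i ≤ b i := by
    intro i
    apply ciSup_le
    intro j
    have h : v j ≤ b i - A i j := ciInf_le (f := fun i => b i - A i j) (Finite.bddBelow_range _) i
    linarith
  have huv : ∀ j, u j ≤ v j := by
    intro j
    apply le_ciInf
    intro i
    have h1 : A i j + u j ≤ maxPlus A u i := le_ciSup (f := fun j => A i j + u j) (Finite.bddAbove_range _) j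
    have h2 := hu i
    linarith
  have hle : ∀ i, maxPlus A u i ≤ maxPlus A v i := by
    intro i
    apply ciSup_le
    intro j
    exact le_trans (by linarith [huv j] : A i j + u j ≤ A i j + v j)
      (le_ciSup (f := fun j => A i j + v j) (Finite.bddAbove_range _) j)
  refine ⟨fun i => ⟨by linarith [hle i], by linarith [hub i]⟩, ?_⟩
  unfold lNorm
  have hℓ0 : 0 < ℓ := lt_of_lt_of_le one_pos hℓ
  apply Real.rpow_le_rpow (by positivity) ?_ (by positivity)
  apply Finset.sum_le_sum
  intro i _
  apply Real.rpow_le_rpow (abs_nonneg _) ?_ (le_of_lt hℓ0)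
  show |(maxPlus A v - b) i| ≤ |(maxPlus A u - b) i|
  simp only [Pi.sub_apply]
  rw [abs_sub_comm, abs_sub_comm (maxPlus A u i),
    abs_of_nonneg (by linarith [hub i]), abs_of_nonneg (by linarith [hu i])]
  linarith [hle i]
end

section
/- Let A be an m×n real matrix and b ∈ R^m. Let û = (-A^T) ⊞' b and μ = ‖A ⊞ û - b‖_∞. Then the vector u* = û + (μ/2)·1 (adding μ/2 to every component) minimizes ‖A ⊞ u - b‖_∞ over all u ∈ R^n, and the minimal value is μ/2. -/
private lemma maxPlus_le_iff {m n : ℕ} (A : Matrix (Fin (m + 1)) (Fin (n + 1)) ℝ)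
    (u : Fin (n + 1) → ℝ) (i : Fin (m + 1)) (c : ℝ) :
    maxPlus A u i ≤ c ↔ ∀ j, A i j + u j ≤ c := by
  unfold maxPlus
  exact ciSup_le_iff (Set.finite_range _).bddAbove

private lemma le_maxPlus {m n : ℕ} (A : Matrix (Fin (m + 1)) (Fin (n + 1)) ℝ)
    (u : Fin (n + 1) → ℝ) (i : Fin (m + 1)) (j : Fin (n + 1)) :
    A i j + u j ≤ maxPlus A u i := by
  unfold maxPlus
  exact le_ciSup (Set.finite_range fun j => A i j + u j).bddAbove j

private lemma maxPlus_shift {m n : ℕ} (A : Matrix (Fin (m + 1)) (Fin (n + 1)) ℝ)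
    (u : Fin (n + 1) → ℝ) (c : ℝ) (i : Fin (m + 1)) :
    maxPlus A (fun j => u j + c) i = maxPlus A u i + c := by
  unfold maxPlus
  rw [ciSup_add (f := fun j => A i j + u j) (Set.finite_range _).bddAbove c]
  congr 1; funext j; ring

theorem infNorm_minimizer {m n : ℕ} (A : Matrix (Fin (m + 1)) (Fin (n + 1)) ℝ)
    (b : Fin (m + 1) → ℝ) :
    letI uhat := negTransMinPlus A b
    letI μ := ‖maxPlus A uhat - b‖    -- sup norm on `ℝ^m`
    letI ustar := fun j => uhat j + μ / 2
    (∀ u : Fin (n + 1) → ℝ, ‖maxPlus A ustar - b‖ ≤ ‖maxPlus A u - b‖) ∧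
      ‖maxPlus A ustar - b‖ = μ / 2 := by
  set uhat := negTransMinPlus A b with huhat
  set μ := ‖maxPlus A uhat - b‖ with hμ
  have hμ0 : 0 ≤ μ := norm_nonneg _
  -- upper bound: maxPlus A uhat ≤ b
  have hub : ∀ i, maxPlus A uhat i ≤ b i := by
    intro i
    rw [maxPlus_le_iff]
    intro j
    have : uhat j ≤ b i - A i j := ciInf_le (Set.finite_range _).bddBelow i
    linarith
  -- each component deviation ≤ μ
  have hcomp : ∀ i, b i - maxPlus A uhat i ≤ μ := by
    intro i
    have h1 : ‖(maxPlus A uhat - b) i‖ ≤ μ := norm_le_pi_norm _ i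
    rw [Pi.sub_apply, Real.norm_eq_abs] at h1
    have := abs_le.mp h1
    linarith [this.1]
  -- attainment of μ
  obtain ⟨i0, hi0⟩ : ∃ i0, b i0 - maxPlus A uhat i0 = μ := by
    obtain ⟨i0, hi0⟩ := Finite.exists_max (fun i => ‖(maxPlus A uhat - b) i‖)
    refine ⟨i0, le_antisymm (hcomp i0) ?_⟩
    have h1 : μ ≤ ‖(maxPlus A uhat - b) i0‖ :=
      (pi_norm_le_iff_of_nonneg (norm_nonneg _)).mpr hi0
    rw [Pi.sub_apply, Real.norm_eq_abs, abs_of_nonpos (by linarith [hub i0])] at h1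
    linarith
  -- value at ustar
  have hval : ‖maxPlus A (fun j => uhat j + μ / 2) - b‖ = μ / 2 := by
    apply le_antisymm
    · rw [pi_norm_le_iff_of_nonneg (by linarith)]
      intro i
      rw [Pi.sub_apply, maxPlus_shift, Real.norm_eq_abs, abs_le]
      constructor
      · have := hcomp i; linarith
      · have := hub i; linarith
    · have h1 : ‖(maxPlus A (fun j => uhat j + μ / 2) - b) i0‖ ≤ _ :=
        norm_le_pi_norm _ i0
      rw [Pi.sub_apply, maxPlus_shift, Real.norm_eq_abs] at h1
      calc μ / 2 ≤ |maxPlus A uhat i0 + μ / 2 - b i0| := by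
            rw [abs_sub_comm]
            have : b i0 - (maxPlus A uhat i0 + μ / 2) = μ / 2 := by linarith
            rw [this]; exact le_abs_self _
        _ ≤ _ := h1
  refine ⟨fun u => ?_, hval⟩
  rw [hval]
  set t := ‖maxPlus A u - b‖ with ht
  have habs : ∀ i, |maxPlus A u i - b i| ≤ t := by
    intro i
    have h1 : ‖(maxPlus A u - b) i‖ ≤ t := norm_le_pi_norm _ i
    rwa [Pi.sub_apply, Real.norm_eq_abs] at h1
  -- u j ≤ uhat j + t
  have hu : ∀ j, u j ≤ uhat j + t := by
    intro j
    have : u j - t ≤ uhat j := by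
      apply le_ciInf
      intro i
      have h2 := le_maxPlus A u i j
      have h3 := (abs_le.mp (habs i)).2
      linarith
    linarith
  -- maxPlus A u i0 ≤ maxPlus A uhat i0 + t
  have h4 : maxPlus A u i0 ≤ maxPlus A uhat i0 + t := by
    rw [← maxPlus_shift, maxPlus_le_iff]
    intro j
    have := le_maxPlus A (fun j => uhat j + t) i0 j
    have := hu j
    linarith [le_maxPlus A (fun j => uhat j + t) i0 j, hu j]
  have h5 := (abs_le.mp (habs i0)).1
  linarith
end

section
/- Let A be an m×n real matrix, b ∈ R^m, and define R(u) = ‖A ⊞ u - b‖_∞ where (A ⊞ u)_i = max_j(a_{ij} + u_j). If u* is a minimizer of R and R(u*) > 0, then R is not differentiable at u*. (Equivalently, the gradient ∇R(u*) does not exist.) -/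
theorem maxPlus_add_smul_one {m n : ℕ} (A : Matrix (Fin (m + 1)) (Fin (n + 1)) ℝ)
    (u : Fin (n + 1) → ℝ) (t : ℝ) : maxPlus A (u + t • 1) = maxPlus A u + t • 1 := by
  ext i
  have hbdd : BddAbove (Set.range fun j => A i j + u j) := (Set.finite_range _).bddAbove
  simpa [maxPlus, add_assoc] using ((OrderIso.addRight t).map_ciSup hbdd).symm

theorem exists_abs_add_mul_le_abs_add (x : ℝ) : ∃ c : ℝ, c ≠ 0 ∧ ∀ t, |x| + c * t ≤ |x + t| := by
  rcases le_total 0 x with hx | hx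
  · exact ⟨1, one_ne_zero, fun t => by rw [abs_of_nonneg hx, one_mul]; exact le_abs_self _⟩
  · exact ⟨-1, by norm_num, fun t => by rw [abs_of_nonpos hx]; linarith [neg_le_abs (x + t)]⟩

theorem IsLocalMin.not_differentiableAt_of_add_mul_le {E : Type*} [NormedAddCommGroup E]
    [NormedSpace ℝ E] {f : E → ℝ} {x w : E} {c : ℝ} (hmin : IsLocalMin f x) (hc : c ≠ 0)
    (hle : ∀ t : ℝ, f x + c * t ≤ f (x + t • w)) : ¬ DifferentiableAt ℝ f x := by
  intro hf
  have hline : HasDerivAt (fun t : ℝ => x + t • w) w 0 := by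
    simpa using ((hasDerivAt_id (0 : ℝ)).smul_const w).const_add x
  have hfx : HasFDerivAt f (0 : E →L[ℝ] ℝ) (x + (0 : ℝ) • w) := by
    simpa [hmin.fderiv_eq_zero] using hf.hasFDerivAt
  have hfline : HasDerivAt (fun t : ℝ => f (x + t • w)) ((0 : E →L[ℝ] ℝ) w) 0 :=
    hfx.comp_hasDerivAt 0 hline
  have hcomp : HasDerivAt (fun t : ℝ => f (x + t • w) - c * t) ((0 : E →L[ℝ] ℝ) w - c * 1) 0 :=
    hfline.sub ((hasDerivAt_id' 0).const_mul c)
  have hmin' : IsLocalMin (fun t : ℝ => f (x + t • w) - c * t) 0 :=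
    Filter.Eventually.of_forall fun t => by simpa [le_sub_iff_add_le] using hle t
  exact hc (by simpa using hmin'.hasDerivAt_eq_zero hcomp)

theorem minimizer_not_differentiable_general {m n : ℕ}
    (A : Matrix (Fin (m + 1)) (Fin (n + 1)) ℝ) (b : Fin (m + 1) → ℝ)
    (R : (Fin (n + 1) → ℝ) → ℝ) (hR : ∀ u, R u = ‖maxPlus A u - b‖)
    (ustar : Fin (n + 1) → ℝ) (hmin : ∀ u, R ustar ≤ R u) :
    ¬ DifferentiableAt ℝ R ustar := by
  set v := maxPlus A ustar - b
  obtain ⟨i, hi : ‖v i‖ = ‖v‖⟩ := (IsGreatest.pi_norm v).1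
  obtain ⟨c, hc, hct⟩ := exists_abs_add_mul_le_abs_add (v i)
  refine (isMinOn_univ_iff.2 hmin).isLocalMin Filter.univ_mem
    |>.not_differentiableAt_of_add_mul_le (w := 1) hc fun t => ?_
  calc R ustar + c * t = |v i| + c * t := by rw [hR, ← hi, Real.norm_eq_abs]
    _ ≤ |v i + t| := hct t
    _ = ‖(maxPlus A (ustar + t • 1) - b) i‖ := by
        rw [maxPlus_add_smul_one, Real.norm_eq_abs]; simp [v, sub_add_eq_add_sub]
    _ ≤ R (ustar + t • 1) := hR _ ▸ norm_le_pi_norm _ i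

theorem minimizer_not_differentiable {m n : ℕ}
    (A : Matrix (Fin (m + 1)) (Fin (n + 1)) ℝ) (b : Fin (m + 1) → ℝ)
    (R : (Fin (n + 1) → ℝ) → ℝ) (hR : ∀ u, R u = ‖maxPlus A u - b‖)
    (ustar : Fin (n + 1) → ℝ) (hmin : ∀ u, R ustar ≤ R u) (hpos : 0 < R ustar) :
    ¬ DifferentiableAt ℝ R ustar :=
  minimizer_not_differentiable_general A b R hR ustar hmin
end

section
/- Fix data points x^(1), ..., x^(N) ∈ R^n, values y ∈ R^N, and a finite exponent set W ⊆ Z^n. The loss function L(p, q) = max_{1≤i≤N} |max_{w∈W}(p_w + w·x^(i)) - max_{w∈W}(q_w + w·x^(i)) - y_i|, viewed as a function of the coefficient vectors (p, q) ∈ R^W × R^W, is a difference of two convex piecewise linear functions; in particular, it can be written as g(p,q) - h(p,q) where g and h are each pointwise maxima of finitely many affine functions of (p,q). -/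
/-!
Each `max_w (p_w + w · x⁽ⁱ⁾)` is a maximum of finitely many affine functions of `(p, q)`.
Maxima of affine functions are closed under `+` and `max`, so their differences are closed
under subtraction, and also under `max` because
`max (a - b) (c - d) = max (a + d) (c + b) - (b + d)`; hence under `|u| = max u (-u)` and
finite suprema as well, which is all the loss function is built from.
-/

open Finset

lemma Finset.sup'_add_sup' {ι κ G : Type*} [AddCommGroup G] [LinearOrder G]
    [IsOrderedAddMonoid G] {s : Finset ι} {t : Finset κ} (hs : s.Nonempty) (ht : t.Nonempty)
    (f : ι → G) (g : κ → G) :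
    s.sup' hs f + t.sup' ht g = (s ×ˢ t).sup' (hs.product ht) fun ij => f ij.1 + g ij.2 := by
  rw [sup'_product_left, sup'_add]
  exact sup'_congr _ rfl fun i _ => add_sup' t g (f i) ht

lemma Finset.sup'_eq_ciSup_subtype {ι α : Type*} [ConditionallyCompleteLattice α]
    {s : Finset ι} (hs : s.Nonempty) (f : ι → α) : s.sup' hs f = ⨆ i : s, f i := by
  rw [sup'_eq_csSup_image, sSup_image']
  rfl

variable {E : Type*} [AddCommGroup E] [Module ℝ E]

def IsMaxAffine (f : E → ℝ) : Prop :=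
  ∃ (S : Finset ((E →ₗ[ℝ] ℝ) × ℝ)) (hS : S.Nonempty), ∀ x, f x = S.sup' hS fun a => a.1 x + a.2

namespace IsMaxAffine

lemma affine (l : E →ₗ[ℝ] ℝ) (c : ℝ) : IsMaxAffine fun x => l x + c :=
  ⟨{(l, c)}, singleton_nonempty _, fun x => by rw [sup'_singleton]⟩

lemma add {f g : E → ℝ} (hf : IsMaxAffine f) (hg : IsMaxAffine g) :
    IsMaxAffine fun x => f x + g x := by
  classical
  obtain ⟨S, hS, hfS⟩ := hf
  obtain ⟨T, hT, hgT⟩ := hg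
  refine ⟨(S ×ˢ T).image fun ab => ab.1 + ab.2, (hS.product hT).image _, fun x => ?_⟩
  dsimp only
  rw [hfS, hgT, sup'_add_sup', sup'_image]
  refine sup'_congr _ rfl fun ab _ => ?_
  simp only [Function.comp_apply, Prod.fst_add, Prod.snd_add, LinearMap.add_apply]
  ring

lemma max {f g : E → ℝ} (hf : IsMaxAffine f) (hg : IsMaxAffine g) :
    IsMaxAffine fun x => max (f x) (g x) := by
  classical
  obtain ⟨S, hS, hfS⟩ := hf
  obtain ⟨T, hT, hgT⟩ := hg
  exact ⟨S ∪ T, hS.mono subset_union_left, fun x => by dsimp only; rw [hfS, hgT, sup'_union hS hT]⟩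

lemma exists_eq_ciSup_fin {f : E → ℝ} (hf : IsMaxAffine f) :
    ∃ (K : ℕ) (α : Fin (K + 1) → E →ₗ[ℝ] ℝ) (β : Fin (K + 1) → ℝ),
      ∀ x, f x = ⨆ k, (α k x + β k) := by
  obtain ⟨S, hS, hfS⟩ := hf
  obtain ⟨K, hK⟩ := Nat.exists_eq_add_one.2 hS.card_pos
  let e : Fin (K + 1) ≃ S := (finCongr hK.symm).trans S.equivFin.symm
  refine ⟨K, fun k => (e k).1.1, fun k => (e k).1.2, fun x => ?_⟩
  rw [hfS, sup'_eq_ciSup_subtype, ← e.iSup_comp]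

end IsMaxAffine

def IsTropicalRational (f : E → ℝ) : Prop :=
  ∃ g h, IsMaxAffine g ∧ IsMaxAffine h ∧ ∀ x, f x = g x - h x

namespace IsTropicalRational

lemma affine (l : E →ₗ[ℝ] ℝ) (c : ℝ) : IsTropicalRational fun x => l x + c :=
  ⟨_, _, .affine l c, .affine 0 0, fun x => by simp⟩

lemma const (c : ℝ) : IsTropicalRational fun _ : E => c := by
  simpa using affine (0 : E →ₗ[ℝ] ℝ) c

lemma neg {f : E → ℝ} (hf : IsTropicalRational f) : IsTropicalRational fun x => -f x := by
  obtain ⟨g, h, hg, hh, hfgh⟩ := hf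
  exact ⟨h, g, hh, hg, fun x => by dsimp only; rw [hfgh, neg_sub]⟩

lemma sub {f₁ f₂ : E → ℝ} (hf₁ : IsTropicalRational f₁) (hf₂ : IsTropicalRational f₂) :
    IsTropicalRational fun x => f₁ x - f₂ x := by
  obtain ⟨g₁, h₁, hg₁, hh₁, hf₁⟩ := hf₁
  obtain ⟨g₂, h₂, hg₂, hh₂, hf₂⟩ := hf₂
  exact ⟨_, _, hg₁.add hh₂, hh₁.add hg₂, fun x => by dsimp only; rw [hf₁, hf₂]; ring⟩

lemma max {f₁ f₂ : E → ℝ} (hf₁ : IsTropicalRational f₁) (hf₂ : IsTropicalRational f₂) :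
    IsTropicalRational fun x => max (f₁ x) (f₂ x) := by
  obtain ⟨g₁, h₁, hg₁, hh₁, hf₁⟩ := hf₁
  obtain ⟨g₂, h₂, hg₂, hh₂, hf₂⟩ := hf₂
  refine ⟨_, _, (hg₁.add hh₂).max (hg₂.add hh₁), hh₁.add hh₂, fun x => ?_⟩
  dsimp only
  rw [hf₁, hf₂, ← max_sub_sub_right]
  congr 1 <;> ring

lemma abs {f : E → ℝ} (hf : IsTropicalRational f) : IsTropicalRational fun x => |f x| := by
  simpa only [abs_eq_max_neg] using hf.max hf.neg

lemma ciSup {ι : Type*} [Fintype ι] {f : ι → E → ℝ} (hf : ∀ i, IsTropicalRational (f i)) :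
    IsTropicalRational fun x => ⨆ i, f i x := by
  cases isEmpty_or_nonempty ι
  · -- an empty supremum of reals is the junk value `0`
    simpa using const (E := E) 0
  · have hsup := sup'_induction univ_nonempty f (p := IsTropicalRational)
      (fun _ h₁ _ h₂ => h₁.max h₂) fun i _ => hf i
    simpa only [← sup'_univ_eq_ciSup, ← Finset.sup'_apply] using hsup

end IsTropicalRational

theorem loss_is_tropical_rational_general {n N : ℕ} (x : Fin (N + 1) → Fin n → ℝ)
    (y : Fin (N + 1) → ℝ) (W : Finset (Fin n → ℤ))
    (L : ({w // w ∈ W} → ℝ) → ({w // w ∈ W} → ℝ) → ℝ)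
    (hL : ∀ p q, L p q =
      ⨆ i, |(⨆ w : {w // w ∈ W}, (p w + ∑ t, ((w : Fin n → ℤ) t : ℝ) * x i t)) -
        (⨆ w : {w // w ∈ W}, (q w + ∑ t, ((w : Fin n → ℤ) t : ℝ) * x i t)) - y i|) :
    ∃ (K₁ K₂ : ℕ)
      (α : Fin (K₁ + 1) → (({w // w ∈ W} → ℝ) × ({w // w ∈ W} → ℝ)) →ₗ[ℝ] ℝ)
      (β : Fin (K₁ + 1) → ℝ)
      (γ : Fin (K₂ + 1) → (({w // w ∈ W} → ℝ) × ({w // w ∈ W} → ℝ)) →ₗ[ℝ] ℝ)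
      (δ : Fin (K₂ + 1) → ℝ),
      ∀ p q, L p q = (⨆ k, (α k (p, q) + β k)) - ⨆ k, (γ k (p, q) + δ k) := by
  let P := {w // w ∈ W} → ℝ
  obtain ⟨g, h, hg, hh, hLgh⟩ : IsTropicalRational fun v : P × P => L v.1 v.2 := by
    simp only [hL]
    exact .ciSup fun i => .abs <| .sub (.sub
      (.ciSup fun w => .affine (.proj w ∘ₗ .fst ℝ P P) _)
      (.ciSup fun w => .affine (.proj w ∘ₗ .snd ℝ P P) _)) (.const (y i))
  obtain ⟨K₁, α, β, hg⟩ := hg.exists_eq_ciSup_fin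
  obtain ⟨K₂, γ, δ, hh⟩ := hh.exists_eq_ciSup_fin
  exact ⟨K₁, K₂, α, β, γ, δ, fun p q => by rw [← hg, ← hh]; exact hLgh (p, q)⟩

theorem loss_is_tropical_rational {n N : ℕ} (x : Fin (N + 1) → Fin n → ℝ)
    (y : Fin (N + 1) → ℝ) (W : Finset (Fin n → ℤ)) (hW : W.Nonempty)
    (L : ({w // w ∈ W} → ℝ) → ({w // w ∈ W} → ℝ) → ℝ)
    (hL : ∀ p q, L p q =
      ⨆ i, |(⨆ w : {w // w ∈ W}, (p w + ∑ t, ((w : Fin n → ℤ) t : ℝ) * x i t)) -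
        (⨆ w : {w // w ∈ W}, (q w + ∑ t, ((w : Fin n → ℤ) t : ℝ) * x i t)) - y i|) :
    ∃ (K₁ K₂ : ℕ)
      (α : Fin (K₁ + 1) → (({w // w ∈ W} → ℝ) × ({w // w ∈ W} → ℝ)) →ₗ[ℝ] ℝ)
      (β : Fin (K₁ + 1) → ℝ)
      (γ : Fin (K₂ + 1) → (({w // w ∈ W} → ℝ) × ({w // w ∈ W} → ℝ)) →ₗ[ℝ] ℝ)
      (δ : Fin (K₂ + 1) → ℝ),
      ∀ p q, L p q = (⨆ k, (α k (p, q) + β k)) - ⨆ k, (γ k (p, q) + δ k) :=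
  loss_is_tropical_rational_general x y W L hL
end

section
/- Fix data points x^(1), ..., x^(N) ∈ R^n, values y ∈ R^N, and a finite exponent set W ⊆ Z^n. The infimum of L(p,q) = max_i |max_{w∈W}(p_w + w·x^(i)) - max_{w∈W}(q_w + w·x^(i)) - y_i| over (p,q) ∈ R^W × R^W is attained, i.e., an optimal solution to the tropical rational regression problem exists. -/
open Finset

section Aux

set_option linter.unusedSectionVars false

variable {I ι : Type*} [Fintype I] [Fintype ι] [Nonempty I] [Nonempty ι]

private noncomputable def trF (a : I → ι → ℝ) (p : ι → ℝ) (i : I) : ℝ := ⨆ w, (p w + a i w)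

private noncomputable def trP (a : I → ι → ℝ) (f : I → ℝ) (w : ι) : ℝ := ⨅ i, (f i - a i w)

private noncomputable def trL (a : I → ι → ℝ) (y : I → ℝ) (p q : ι → ℝ) : ℝ :=
  ⨆ i, |trF a p i - trF a q i - y i|

private lemma le_trF (a : I → ι → ℝ) (p : ι → ℝ) (i : I) (w : ι) :
    p w + a i w ≤ trF a p i := by
  unfold trF; exact le_ciSup (f := fun w => p w + a i w) ((Set.finite_range _).bddAbove) w

private lemma trF_le (a : I → ι → ℝ) (p : ι → ℝ) (i : I) (b : ℝ)
    (h : ∀ w, p w + a i w ≤ b) : trF a p i ≤ b := ciSup_le h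

private lemma trF_ex (a : I → ι → ℝ) (p : ι → ℝ) (i : I) :
    ∃ w, trF a p i = p w + a i w :=
  (exists_eq_ciSup_of_finite).imp fun _ h => h.symm

private lemma trP_le (a : I → ι → ℝ) (f : I → ℝ) (w : ι) (i : I) :
    trP a f w ≤ f i - a i w :=
  ciInf_le ((Set.finite_range _).bddBelow) i

private lemma le_trP (a : I → ι → ℝ) (f : I → ℝ) (w : ι) (b : ℝ)
    (h : ∀ i, b ≤ f i - a i w) : b ≤ trP a f w := le_ciInf h

private lemma trP_ex (a : I → ι → ℝ) (f : I → ℝ) (w : ι) :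
    ∃ i, trP a f w = f i - a i w :=
  (exists_eq_ciInf_of_finite).imp fun _ h => h.symm

private lemma trF_trP (a : I → ι → ℝ) (p : ι → ℝ) :
    trF a (trP a (trF a p)) = trF a p := by
  funext i
  apply le_antisymm
  · apply trF_le
    intro w
    have := trP_le a (trF a p) w i
    linarith
  · obtain ⟨w, hw⟩ := trF_ex a p i
    have h1 : p w ≤ trP a (trF a p) w := by
      apply le_trP
      intro j
      have := le_trF a p j w
      linarith
    have := le_trF a (trP a (trF a p)) i w
    linarith

private lemma trF_sub (a : I → ι → ℝ) (p : ι → ℝ) (c : ℝ) (i : I) :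
    trF a (fun w => p w - c) i = trF a p i - c := by
  apply le_antisymm
  · apply trF_le
    intro w
    have := le_trF a p i w
    linarith
  · have h : trF a p i ≤ trF a (fun w => p w - c) i + c := by
      apply trF_le
      intro w
      have := le_trF a (fun w => p w - c) i w
      linarith
    linarith

private lemma le_trL (a : I → ι → ℝ) (y : I → ℝ) (p q : ι → ℝ) (i : I) :
    |trF a p i - trF a q i - y i| ≤ trL a y p q := by
  unfold trL; exact le_ciSup (f := fun i => |trF a p i - trF a q i - y i|) ((Set.finite_range _).bddAbove) i

private lemma trL_le (a : I → ι → ℝ) (y : I → ℝ) (p q : ι → ℝ) (b : ℝ)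
    (h : ∀ i, |trF a p i - trF a q i - y i| ≤ b) : trL a y p q ≤ b := ciSup_le h

private lemma trL_nonneg (a : I → ι → ℝ) (y : I → ℝ) (p q : ι → ℝ) :
    0 ≤ trL a y p q :=
  le_trans (abs_nonneg _) (le_trL a y p q (Classical.arbitrary I))

private lemma trL_shift (a : I → ι → ℝ) (y : I → ℝ) (p q : ι → ℝ) (c : ℝ) :
    trL a y (fun w => p w - c) (fun w => q w - c) = trL a y p q := by
  unfold trL
  congr 1
  funext i
  rw [trF_sub, trF_sub]
  ring_nf

private lemma trL_cont (a : I → ι → ℝ) (y : I → ℝ) :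
    Continuous (fun z : (ι → ℝ) × (ι → ℝ) => trL a y z.1 z.2) := by
  have contF : ∀ (i : I), Continuous (fun p : ι → ℝ => trF a p i) := by
    intro i
    have h : (fun p : ι → ℝ => trF a p i)
        = fun p => Finset.univ.sup' Finset.univ_nonempty (fun w => p w + a i w) := by
      funext p
      rw [Finset.sup'_univ_eq_ciSup]
      rfl
    rw [h]
    exact Continuous.finset_sup'_apply Finset.univ_nonempty
      (fun w _ => (continuous_apply w).add continuous_const)
  have h : (fun z : (ι → ℝ) × (ι → ℝ) => trL a y z.1 z.2)
      = fun z => Finset.univ.sup' Finset.univ_nonempty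
          (fun i : I => |trF a z.1 i - trF a z.2 i - y i|) := by
    funext z
    rw [Finset.sup'_univ_eq_ciSup]
    rfl
  rw [h]
  apply Continuous.finset_sup'_apply Finset.univ_nonempty
  intro i _
  exact ((((contF i).comp continuous_fst).sub
    ((contF i).comp continuous_snd)).sub continuous_const).abs

private lemma tr_aux (a : I → ι → ℝ) (y : I → ℝ) :
    ∃ p q : ι → ℝ, ∀ p' q' : ι → ℝ, trL a y p q ≤ trL a y p' q' := by
  classical
  obtain ⟨w₀⟩ := (inferInstance : Nonempty ι)
  -- constants
  set A : ℝ := ⨆ z : I × ι, |a z.1 z.2 - a z.1 w₀| with hA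
  have hAle : ∀ (i : I) (w : ι), |a i w - a i w₀| ≤ A := by
    intro i w
    rw [hA]
    exact le_ciSup (f := fun z : I × ι => |a z.1 z.2 - a z.1 w₀|) ((Set.finite_range _).bddAbove) (⟨i, w⟩ : I × ι)
  have hA0 : 0 ≤ A := le_trans (abs_nonneg _) (hAle (Classical.arbitrary I) w₀)
  set Y : ℝ := ⨆ i : I, |y i| with hYdef
  have hYle : ∀ i : I, |y i| ≤ Y := by
    intro i
    rw [hYdef]
    exact le_ciSup (f := fun i : I => |y i|) ((Set.finite_range _).bddAbove) i
  have hY0 : 0 ≤ Y := le_trans (abs_nonneg _) (hYle (Classical.arbitrary I))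
  set M : ℝ := trL a y 0 0 with hMdef
  have hM0 : 0 ≤ M := trL_nonneg a y 0 0
  set R : ℝ := A + Y + M with hRdef
  have hR0 : 0 ≤ R := by positivity
  -- compact set
  set S : Set (ι → ℝ) := Set.pi Set.univ (fun _ => Set.Icc (-R) R) with hSdef
  have hScomp : IsCompact S := isCompact_univ_pi (fun _ => isCompact_Icc)
  set K : Set ((ι → ℝ) × (ι → ℝ)) := S ×ˢ S with hKdef
  have hKcomp : IsCompact K := hScomp.prod hScomp
  have hmemS : ∀ p : ι → ℝ, (∀ w, -R ≤ p w ∧ p w ≤ R) → p ∈ S := by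
    intro p h
    rw [hSdef, Set.mem_univ_pi]
    exact fun w => ⟨(h w).1, (h w).2⟩
  have hKne : K.Nonempty := by
    refine ⟨(0, 0), ?_, ?_⟩ <;>
    · apply hmemS
      intro w
      constructor <;> simp [hR0]
  -- minimizer on K
  obtain ⟨z, hzK, hzmin⟩ := hKcomp.exists_isMinOn hKne (trL_cont a y).continuousOn
  have hzmin' : ∀ z' ∈ K, trL a y z.1 z.2 ≤ trL a y z'.1 z'.2 := fun z' hz' =>
    isMinOn_iff.mp hzmin z' hz'
  -- normalization
  have key : ∀ p q : ι → ℝ, trL a y p q ≤ M →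
      ∃ p' q' : ι → ℝ, ((p', q') ∈ K) ∧ trL a y p' q' = trL a y p q := by
    intro p q hpq
    set c : ℝ := trP a (trF a p) w₀ with hcdef
    refine ⟨fun w => trP a (trF a p) w - c, fun w => trP a (trF a q) w - c, ?_, ?_⟩
    · -- membership in K
      have hFqFp : ∀ j : I, |trF a q j - trF a p j| ≤ Y + M := by
        intro j
        have h1 := le_trans (le_trL a y p q j) hpq
        have h2 := hYle j
        rw [abs_le] at h1 h2 ⊢
        constructor <;> linarith
      constructor
      · -- p part
        apply hmemS
        intro w
        obtain ⟨j0, hj0⟩ := trP_ex a (trF a p) w₀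
        obtain ⟨j1, hj1⟩ := trP_ex a (trF a p) w
        have hup : trP a (trF a p) w ≤ trF a p j0 - a j0 w := trP_le a _ w j0
        have hdn : trP a (trF a p) w₀ ≤ trF a p j1 - a j1 w₀ := trP_le a _ w₀ j1
        have hb0 := abs_le.mp (hAle j0 w)
        have hb1 := abs_le.mp (hAle j1 w)
        constructor
        · rw [hcdef]
          simp only
          linarith [hj1.le, hj1.ge]
        · rw [hcdef]
          simp only
          linarith [hj0.le, hj0.ge]
      · -- q part
        apply hmemS
        intro w
        obtain ⟨j0, hj0⟩ := trP_ex a (trF a p) w₀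
        obtain ⟨j1, hj1⟩ := trP_ex a (trF a q) w
        have hup : trP a (trF a q) w ≤ trF a q j0 - a j0 w := trP_le a _ w j0
        have hdn : trP a (trF a p) w₀ ≤ trF a p j1 - a j1 w₀ := trP_le a _ w₀ j1
        have hb0 := abs_le.mp (hAle j0 w)
        have hb1 := abs_le.mp (hAle j1 w)
        have hd0 := abs_le.mp (hFqFp j0)
        have hd1 := abs_le.mp (hFqFp j1)
        constructor
        · rw [hcdef]
          simp only
          linarith [hj1.le, hj1.ge]
        · rw [hcdef]
          simp only
          linarith [hj0.le, hj0.ge]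
    · -- value equality
      rw [trL_shift]
      unfold trL
      congr 1
      funext i
      rw [trF_trP, trF_trP]
  -- conclusion
  refine ⟨z.1, z.2, ?_⟩
  intro p' q'
  rcases le_total (trL a y p' q') M with h | h
  · obtain ⟨p'', q'', hKmem, hEq⟩ := key p' q' h
    calc trL a y z.1 z.2 ≤ trL a y p'' q'' := hzmin' (p'', q'') hKmem
      _ = trL a y p' q' := hEq
  · obtain ⟨p'', q'', hKmem, hEq⟩ := key 0 0 le_rfl
    calc trL a y z.1 z.2 ≤ trL a y p'' q'' := hzmin' (p'', q'') hKmem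
      _ = M := hEq
      _ ≤ trL a y p' q' := h

end Aux

theorem tropical_rational_regression_min_attained {n N : ℕ}
    (x : Fin (N + 1) → Fin n → ℝ) (y : Fin (N + 1) → ℝ)
    (W : Finset (Fin n → ℤ)) (hW : W.Nonempty)
    (L : ({w // w ∈ W} → ℝ) → ({w // w ∈ W} → ℝ) → ℝ)
    (hL : ∀ p q, L p q =
      ⨆ i, |(⨆ w : {w // w ∈ W}, (p w + ∑ t, ((w : Fin n → ℤ) t : ℝ) * x i t)) -
        (⨆ w : {w // w ∈ W}, (q w + ∑ t, ((w : Fin n → ℤ) t : ℝ) * x i t)) - y i|) :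
    ∃ p q, ∀ p' q', L p q ≤ L p' q' := by
  haveI : Nonempty {w // w ∈ W} := ⟨⟨hW.choose, hW.choose_spec⟩⟩
  obtain ⟨p, q, h⟩ := tr_aux
    (fun (i : Fin (N + 1)) (w : {w // w ∈ W}) => ∑ t, ((w : Fin n → ℤ) t : ℝ) * x i t) y
  refine ⟨p, q, fun p' q' => ?_⟩
  rw [hL, hL]
  exact h p' q'
end

section
/- Let L: R^d → R be a continuous function that is affine on the closure of each of finitely many open polyhedra A₁,...,A_s whose union is dense in R^d (the complement of a finite union of hyperplane-like nondifferentiability sets), and suppose L ≥ 0 everywhere and L is not constant. If L attains its minimum, then L attains its minimum at some point where L is not differentiable. -/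
open Topology Filter

theorem piecewise_affine_min_at_nondiff_point {d s : ℕ}
    (L : (Fin d → ℝ) → ℝ) (hLcont : Continuous L)
    (A : Fin (s + 1) → Set (Fin d → ℝ))
    (hopen : ∀ k, IsOpen (A k)) (hconv : ∀ k, Convex ℝ (A k))
    (haff : ∀ k, ∃ (ℓ : (Fin d → ℝ) →ₗ[ℝ] ℝ) (c : ℝ),
      ∀ x ∈ closure (A k), L x = ℓ x + c)
    (hdense : Dense (⋃ k, A k))
    (hnonneg : ∀ x, 0 ≤ L x)
    (hnonconst : ∃ x y, L x ≠ L y)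
    (hmin : ∃ z, ∀ x, L z ≤ L x) :
    ∃ z, (∀ x, L z ≤ L x) ∧ ¬ DifferentiableAt ℝ L z := by
  obtain ⟨z₀, hz₀⟩ := hmin
  set m := L z₀ with hm
  set M : Set (Fin d → ℝ) := L ⁻¹' {m} with hMdef
  have hMclosed : IsClosed M := isClosed_singleton.preimage hLcont
  have hMne : M.Nonempty := ⟨z₀, rfl⟩
  have hMnuniv : M ≠ Set.univ := by
    obtain ⟨x, y, hxy⟩ := hnonconst
    intro h
    have hx : L x = m := Set.eq_univ_iff_forall.mp h x
    have hy : L y = m := Set.eq_univ_iff_forall.mp h y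
    exact hxy (hx.trans hy.symm)
  obtain ⟨z, hz⟩ := nonempty_frontier_iff.mpr ⟨hMne, hMnuniv⟩
  have hzM : L z = m := hMclosed.frontier_subset hz
  have hzmin : ∀ x, L z ≤ L x := fun x => hzM ▸ hz₀ x
  refine ⟨z, hzmin, ?_⟩
  intro hdiff
  have hzc : z ∈ closure Mᶜ := by
    rw [frontier_eq_closure_inter_closure] at hz
    exact hz.2
  have hcover : (Set.univ : Set (Fin d → ℝ)) ⊆ ⋃ k, closure (A k) := by
    rw [← hdense.closure_eq]
    exact closure_minimal (Set.iUnion_mono fun k => subset_closure)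
      (isClosed_iUnion_of_finite fun k => isClosed_closure)
  have hsub : Mᶜ ⊆ ⋃ k, (closure (A k) ∩ Mᶜ) := by
    intro x hx
    obtain ⟨k, hk⟩ := Set.mem_iUnion.mp (hcover (Set.mem_univ x))
    exact Set.mem_iUnion.mpr ⟨k, hk, hx⟩
  have hzU : z ∈ ⋃ k, closure (closure (A k) ∩ Mᶜ) := by
    refine closure_minimal ?_
      (isClosed_iUnion_of_finite fun k => isClosed_closure) (closure_mono hsub hzc)
    exact Set.iUnion_mono fun k => subset_closure
  obtain ⟨k, hzk⟩ := Set.mem_iUnion.mp hzU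
  have hne : (closure (A k) ∩ Mᶜ).Nonempty := by
    rcases (closure (A k) ∩ Mᶜ).eq_empty_or_nonempty with h | h
    · rw [h, closure_empty] at hzk; exact hzk.elim
    · exact h
  obtain ⟨w, hwA, hwM⟩ := hne
  have hzA : z ∈ closure (A k) :=
    closure_minimal Set.inter_subset_left isClosed_closure hzk
  obtain ⟨ℓ, c, hℓ⟩ := haff k
  have hdpos : 0 < L w - L z := by
    have h1 : L z ≤ L w := hzmin w
    have h2 : L w ≠ m := hwM
    have : L z ≠ L w := fun h => h2 (h ▸ hzM)
    exact sub_pos.mpr (lt_of_le_of_ne h1 this)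
  have hwz : w - z ≠ 0 := by
    intro h
    rw [sub_eq_zero] at h
    rw [h, sub_self] at hdpos
    exact lt_irrefl 0 hdpos
  have hnorm : 0 < ‖w - z‖ := norm_pos_iff.mpr hwz
  have hloc : IsLocalMin L z := Filter.Eventually.of_forall hzmin
  have hf0 : fderiv ℝ L z = 0 := hloc.fderiv_eq_zero
  have hF : HasFDerivAt L (0 : (Fin d → ℝ) →L[ℝ] ℝ) z := hf0 ▸ hdiff.hasFDerivAt
  have hlo := hF.isLittleO
  simp only [ContinuousLinearMap.zero_apply, sub_zero] at hlo
  have hc : (0 : ℝ) < (L w - L z) / (2 * ‖w - z‖) := div_pos hdpos (by linarith)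
  have hev : ∀ᶠ x in 𝓝 z, ‖L x - L z‖ ≤ ((L w - L z) / (2 * ‖w - z‖)) * ‖x - z‖ :=
    hlo.def hc
  -- path t ↦ (1-t)•z + t•w
  have hpath : Filter.Tendsto (fun t : ℝ => (1 - t) • z + t • w) (nhdsWithin (0:ℝ) (Set.Ioi 0)) (𝓝 z) := by
    have hcont : Continuous (fun t : ℝ => (1 - t) • z + t • w) :=
      ((continuous_const.sub continuous_id).smul continuous_const).add
        (continuous_id.smul continuous_const)
    have := (hcont.tendsto 0).mono_left (nhdsWithin_le_nhds (s := Set.Ioi (0:ℝ)))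
    simpa using this
  have hev2 : ∀ᶠ t in nhdsWithin (0:ℝ) (Set.Ioi 0),
      ‖L ((1 - t) • z + t • w) - L z‖ ≤ ((L w - L z) / (2 * ‖w - z‖)) * ‖((1 - t) • z + t • w) - z‖ :=
    hpath.eventually hev
  have hev3 : ∀ᶠ t in nhdsWithin (0:ℝ) (Set.Ioi 0), t ∈ Set.Ioo (0:ℝ) 1 := by
    have : Set.Ioo (0:ℝ) 1 ∈ nhdsWithin (0:ℝ) (Set.Ioi 0) := by
      apply Ioo_mem_nhdsGT_of_mem
      constructor <;> norm_num
    exact this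
  obtain ⟨t, ht1, ht2⟩ := (hev2.and hev3).exists
  obtain ⟨ht0, htlt1⟩ := ht2
  -- membership of path point in closure (A k)
  set x := (1 - t) • z + t • w with hx
  have hxA : x ∈ closure (A k) :=
    (hconv k).closure hzA hwA (by linarith) (le_of_lt ht0) (by ring)
  have hLx : L x - L z = t * (L w - L z) := by
    have e1 : L x = ℓ x + c := hℓ x hxA
    have e2 : L z = ℓ z + c := hℓ z hzA
    have e3 : L w = ℓ w + c := hℓ w hwA
    have e4 : ℓ x = (1 - t) * ℓ z + t * ℓ w := by
      rw [hx, map_add, map_smul, map_smul]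
      simp [smul_eq_mul]
    rw [e1, e4, e2, e3]
    ring
  have hxz : x - z = t • (w - z) := by
    rw [hx]
    module
  have hnx : ‖x - z‖ = t * ‖w - z‖ := by
    rw [hxz, norm_smul, Real.norm_eq_abs, abs_of_pos ht0]
  rw [hLx, hnx, Real.norm_eq_abs, abs_of_pos (mul_pos ht0 hdpos)] at ht1
  have hrhs : (L w - L z) / (2 * ‖w - z‖) * (t * ‖w - z‖) = t * (L w - L z) / 2 := by
    field_simp
  rw [hrhs] at ht1
  nlinarith [mul_pos ht0 hdpos]
end
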